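/- arXiv:2201.00165 — 2 statements merged into one kernel-verified Lean document; each statement's English description precedes it below -/
import Mathlib

section
/- Let A be an n×n 0/1 matrix with r_i ones in row i. Then Per(A) ≤ ∏_{i=1}^n (r_i!)^{1/r_i}. -/
/-!
Schrijver's proof. Let `S` be the set of permutations `σ` with `A i (σ i) = 1` for all `i`, so
`Per(A) = |S|`, and let `N i k` be the number of `σ ∈ S` with `σ i = k`; when nonzero it is at
most the permanent of the `(i, k)` minor, whose row sums are `r_j - A j k`. For each row `i`,
convexity of `x log x` over the at most `r_i` values `σ i` gives
`|S| log |S| ≤ |S| log r_i + ∑_{σ ∈ S} log N i (σ i)`. Bounding `log N i (σ i)` by induction and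
summing over `i`, each row `j` contributes its value `w(r_j) = log (r_j!) / r_j` once per index,
which yields `n |S| log |S| ≤ n |S| ∑_j w(r_j)`.
-/
open Finset

/-- The permanent of a square matrix with natural number entries. -/
def permanent {n : ℕ} (A : Matrix (Fin n) (Fin n) ℕ) : ℕ :=
  ∑ σ : Equiv.Perm (Fin n), ∏ i, A i (σ i)

open Real Equiv
open scoped Nat

theorem sum_mul_log_sum_le {α : Type*} (s : Finset α) (t : α → ℝ) (ht : ∀ a ∈ s, 0 ≤ t a) :
    (∑ a ∈ s, t a) * log (∑ a ∈ s, t a) ≤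
      (∑ a ∈ s, t a) * log #s + ∑ a ∈ s, t a * log (t a) := by
  rcases s.eq_empty_or_nonempty with rfl | hs
  · simp
  set P := ∑ a ∈ s, t a
  have hc : (0 : ℝ) < #s := by exact_mod_cast hs.card_pos
  have hw : ∑ _a ∈ s, (#s : ℝ)⁻¹ = 1 := by
    rw [sum_const, nsmul_eq_mul, mul_inv_cancel₀ hc.ne']
  have jensen := convexOn_mul_log.map_sum_le (fun _ _ => inv_nonneg.mpr hc.le) hw
    (fun a ha => Set.mem_Ici.mpr (ht a ha))
  simp only [smul_eq_mul, ← mul_sum] at jensen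
  have hlog : P * log ((#s : ℝ)⁻¹ * P) = P * log P - P * log #s := by
    rcases eq_or_ne P 0 with hP | hP
    · simp [hP]
    · rw [log_mul (inv_ne_zero hc.ne') hP, log_inv]; ring
  calc P * log P = P * log #s + #s * ((#s : ℝ)⁻¹ * P * log ((#s : ℝ)⁻¹ * P)) := by
        rw [mul_assoc, ← mul_assoc (#s : ℝ), mul_inv_cancel₀ hc.ne', one_mul, hlog]; ring
    _ ≤ P * log #s + #s * ((#s : ℝ)⁻¹ * ∑ a ∈ s, t a * log (t a)) := by gcongr
    _ = P * log #s + ∑ a ∈ s, t a * log (t a) := by rw [← mul_assoc, mul_inv_cancel₀ hc.ne', one_mul]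

theorem sum_eq_card_filter_eq_one {ι : Type*} [Fintype ι] (f : ι → ℕ)
    (hf : ∀ k, f k = 0 ∨ f k = 1) : ∑ k, f k = #{k | f k = 1} := by
  rw [card_filter]
  refine sum_congr rfl fun k _ => ?_
  rcases hf k with h | h <;> simp [h]

noncomputable def logRootFactorial (r : ℕ) : ℝ := log r ! / r

theorem logRootFactorial_nonneg (r : ℕ) : 0 ≤ logRootFactorial r :=
  div_nonneg (log_natCast_nonneg _) r.cast_nonneg

theorem natCast_mul_logRootFactorial (r : ℕ) : r * logRootFactorial r = log r ! := by
  rcases eq_or_ne r 0 with rfl | hr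
  · simp
  · rw [logRootFactorial, mul_div_cancel₀ _ (Nat.cast_ne_zero.mpr hr)]

theorem factorial_rpow_one_div (r : ℕ) :
    (r ! : ℝ) ^ ((1 : ℝ) / r) = exp (logRootFactorial r) := by
  rw [rpow_def_of_pos (by exact_mod_cast r.factorial_pos), logRootFactorial]
  ring_nf

theorem log_add_sum_logRootFactorial_sub {ι : Type*} [Fintype ι] (f : ι → ℕ)
    (hf : ∀ k, f k = 0 ∨ f k = 1) (hr : 1 ≤ ∑ k, f k) :
    log (∑ k, f k : ℕ) + (∑ k, logRootFactorial ((∑ l, f l) - f k) -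
      logRootFactorial ((∑ l, f l) - 1)) = Fintype.card ι * logRootFactorial (∑ k, f k) := by
  set r := ∑ k, f k with hr_def
  have hones : (#{k | f k = 1} : ℝ) = r := by rw [hr_def, sum_eq_card_filter_eq_one f hf]
  have hzeros : (#{k | ¬f k = 1} : ℝ) = Fintype.card ι - r := by
    rw [← hones, eq_sub_iff_add_eq', ← Nat.cast_add, card_filter_add_card_filter_not, card_univ]
  have hsum : ∑ k, logRootFactorial (r - f k) =
      r * logRootFactorial (r - 1) + (Fintype.card ι - r) * logRootFactorial r := by
    have (k : ι) : logRootFactorial (r - f k) =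
        if f k = 1 then logRootFactorial (r - 1) else logRootFactorial r := by
      rcases hf k with h | h <;> simp [h]
    rw [sum_congr rfl fun k _ => this k, sum_ite, sum_const, sum_const, nsmul_eq_mul,
      nsmul_eq_mul, hones, hzeros]
  have hfact : log r + (r - 1 : ℕ) * logRootFactorial (r - 1) = r * logRootFactorial r := by
    rw [natCast_mul_logRootFactorial, natCast_mul_logRootFactorial, ← log_mul (by positivity)
      (by positivity), ← Nat.cast_mul, Nat.mul_factorial_pred (by omega)]
  rw [Nat.cast_sub hr, Nat.cast_one] at hfact
  rw [hsum]
  linear_combination hfact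

section SupportPerms

variable {ι : Type*} [Fintype ι] [DecidableEq ι] (A : Matrix ι ι ℕ)

def supportPerms : Finset (Perm ι) := {σ | ∀ i, A i (σ i) = 1}

variable {A} in
theorem mem_supportPerms {σ : Perm ι} : σ ∈ supportPerms A ↔ ∀ i, A i (σ i) = 1 := by
  simp [supportPerms]

theorem card_mul_log_card_supportPerms_le (h01 : ∀ i j, A i j = 0 ∨ A i j = 1) (i : ι) :
    (#(supportPerms A) : ℝ) * log #(supportPerms A) ≤
      #(supportPerms A) * log (∑ j, A i j : ℕ) +
        ∑ σ ∈ supportPerms A, log #{τ ∈ supportPerms A | τ i = σ i} := by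
  set S := supportPerms A
  set T := S.image (· i)
  have hsum : ∑ k ∈ T, (#{τ ∈ S | τ i = k} : ℝ) = #S := by
    exact_mod_cast (card_eq_sum_card_image (· i) S).symm
  have hfib : ∑ σ ∈ S, log #{τ ∈ S | τ i = σ i} =
      ∑ k ∈ T, (#{τ ∈ S | τ i = k} : ℝ) * log #{τ ∈ S | τ i = k} := by
    simp only [sum_comp (fun k => log #{τ ∈ S | τ i = k}) (fun σ : Perm ι => σ i), nsmul_eq_mul, T]
  have hT : #T ≤ ∑ j, A i j := by
    rw [sum_eq_card_filter_eq_one _ (h01 i)]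
    refine card_le_card fun k hk => ?_
    obtain ⟨σ, hσ, rfl⟩ := mem_image.mp hk
    simpa using mem_supportPerms.mp hσ i
  have hlog : (#S : ℝ) * log #T ≤ #S * log (∑ j, A i j : ℕ) := by
    rcases T.eq_empty_or_nonempty with hT0 | hT0
    · rw [hT0, card_empty, Nat.cast_zero, log_zero, mul_zero]
      exact mul_nonneg (Nat.cast_nonneg _) (log_natCast_nonneg _)
    · gcongr
  have := sum_mul_log_sum_le T (fun k => (#{τ ∈ S | τ i = k} : ℝ)) (fun _ _ => by positivity)
  rw [hsum] at this
  linarith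

end SupportPerms

theorem permanent_eq_card_supportPerms {n : ℕ} (A : Matrix (Fin n) (Fin n) ℕ)
    (h01 : ∀ i j, A i j = 0 ∨ A i j = 1) : permanent A = #(supportPerms A) := by
  rw [supportPerms, card_filter, permanent]
  refine sum_congr rfl fun σ _ => ?_
  split_ifs with h
  · exact prod_eq_one fun i _ => h i
  · obtain ⟨i, hi⟩ := not_forall.mp h
    exact prod_eq_zero (mem_univ i) ((h01 i (σ i)).resolve_right hi)

section Minor

variable {m : ℕ}

/-- A permutation with `σ i = k`, read as a permutation of the indices of the `(i, k)` minor. -/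
def minorPerm (i k : Fin (m + 1)) (σ : Perm (Fin (m + 1))) : Perm (Fin m) :=
  removeNone ((finSuccEquiv' i).symm.trans (σ.trans (finSuccEquiv' k)))

theorem succAbove_minorPerm {i k : Fin (m + 1)} {σ : Perm (Fin (m + 1))} (hσ : σ i = k)
    (j : Fin m) : k.succAbove (minorPerm i k σ j) = σ (i.succAbove j) := by
  have hne : σ (i.succAbove j) ≠ k := hσ ▸ σ.injective.ne (i.succAbove_ne j)
  obtain ⟨l, hl⟩ := Fin.exists_succAbove_eq hne
  have hsome : ((finSuccEquiv' i).symm.trans (σ.trans (finSuccEquiv' k))) (some j) = some l := by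
    simp [finSuccEquiv'_symm_some, ← hl, finSuccEquiv'_succAbove]
  rw [← hl, minorPerm, Option.some_injective _ ((removeNone_some _ ⟨l, hsome⟩).trans hsome)]

theorem card_fiber_supportPerms_le (A : Matrix (Fin (m + 1)) (Fin (m + 1)) ℕ) (i k : Fin (m + 1)) :
    #{σ ∈ supportPerms A | σ i = k} ≤ #(supportPerms (A.submatrix i.succAbove k.succAbove)) := by
  refine card_le_card_of_injOn (minorPerm i k) (fun σ hσ => ?_) fun σ hσ τ hτ h => ?_
  · simp only [mem_coe, mem_filter, mem_supportPerms] at hσ ⊢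
    intro j
    rw [Matrix.submatrix_apply, succAbove_minorPerm hσ.2]
    exact hσ.1 _
  · simp only [mem_coe, mem_filter] at hσ hτ
    ext x
    rcases eq_or_ne x i with rfl | hx
    · rw [hσ.2, hτ.2]
    · obtain ⟨j, rfl⟩ := Fin.exists_succAbove_eq hx
      rw [← succAbove_minorPerm hσ.2, ← succAbove_minorPerm hτ.2, h]

end Minor

/-- Brégman's bound in logarithmic form; since `log 0 = 0` it holds trivially when `Per(A) = 0`. -/
def BregmanLogBound (n : ℕ) : Prop :=
  ∀ A : Matrix (Fin n) (Fin n) ℕ, (∀ i j, A i j = 0 ∨ A i j = 1) →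
    log #(supportPerms A) ≤ ∑ i, logRootFactorial (∑ j, A i j)

theorem log_card_fiber_supportPerms_le {m : ℕ} (ih : BregmanLogBound m)
    {A : Matrix (Fin (m + 1)) (Fin (m + 1)) ℕ} (h01 : ∀ i j, A i j = 0 ∨ A i j = 1)
    (i k : Fin (m + 1)) :
    log #{σ ∈ supportPerms A | σ i = k} ≤
      ∑ j, logRootFactorial ((∑ l, A j l) - A j k) - logRootFactorial ((∑ l, A i l) - A i k) := by
  have hminor (j : Fin m) : ∑ l, A.submatrix i.succAbove k.succAbove j l =
      (∑ l, A (i.succAbove j) l) - A (i.succAbove j) k := by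
    rw [Fin.sum_univ_succAbove (A (i.succAbove j)) k, Nat.add_sub_cancel_left]; rfl
  rw [Fin.sum_univ_succAbove _ i, add_sub_cancel_left]
  rcases Nat.eq_zero_or_pos #{σ ∈ supportPerms A | σ i = k} with h0 | hpos
  · rw [h0, Nat.cast_zero, log_zero]
    exact sum_nonneg fun j _ => logRootFactorial_nonneg _
  calc log #{σ ∈ supportPerms A | σ i = k}
      ≤ log #(supportPerms (A.submatrix i.succAbove k.succAbove)) := by
        gcongr
        exact card_fiber_supportPerms_le A i k
    _ ≤ _ := ih _ fun _ _ => h01 _ _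
    _ = _ := sum_congr rfl fun j _ => by rw [hminor]

theorem sum_log_card_fiber_supportPerms_le {m : ℕ} (ih : BregmanLogBound m)
    {A : Matrix (Fin (m + 1)) (Fin (m + 1)) ℕ} (h01 : ∀ i j, A i j = 0 ∨ A i j = 1)
    {σ : Perm (Fin (m + 1))} (hσ : σ ∈ supportPerms A) :
    ∑ i, log #{τ ∈ supportPerms A | τ i = σ i} ≤
      ∑ j, (∑ k, logRootFactorial ((∑ l, A j l) - A j k) - logRootFactorial ((∑ l, A j l) - 1)) := by
  calc ∑ i, log #{τ ∈ supportPerms A | τ i = σ i}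
      ≤ ∑ i, (∑ j, logRootFactorial ((∑ l, A j l) - A j (σ i)) -
          logRootFactorial ((∑ l, A i l) - A i (σ i))) :=
        sum_le_sum fun i _ => log_card_fiber_supportPerms_le ih h01 i (σ i)
    _ = _ := by
        simp only [mem_supportPerms.mp hσ, sum_sub_distrib]
        rw [sum_comm]
        congr 1
        exact sum_congr rfl fun j _ => Equiv.sum_comp σ fun k => logRootFactorial (_ - A j k)

theorem BregmanLogBound.succ {m : ℕ} (ih : BregmanLogBound m) : BregmanLogBound (m + 1) := by
  intro A h01
  rcases (supportPerms A).eq_empty_or_nonempty with hS | ⟨σ₀, hσ₀⟩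
  · rw [hS, card_empty, Nat.cast_zero, log_zero]
    exact sum_nonneg fun i _ => logRootFactorial_nonneg _
  set S := supportPerms A
  set P := (#S : ℝ)
  have hP : 0 < P := Nat.cast_pos.mpr (card_pos.mpr ⟨σ₀, hσ₀⟩)
  have hrow (j : Fin (m + 1)) : 1 ≤ ∑ l, A j l :=
    (mem_supportPerms.mp hσ₀ j).symm.le.trans
      (single_le_sum (f := A j) (fun _ _ => Nat.zero_le _) (mem_univ _))
  have key : (m + 1) * P * log P ≤ (m + 1) * P * ∑ j, logRootFactorial (∑ l, A j l) :=
    calc (m + 1) * P * log P = ∑ _i : Fin (m + 1), P * log P := by simp [mul_assoc]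
      _ ≤ ∑ i, (P * log (∑ j, A i j : ℕ) + ∑ σ ∈ S, log #{τ ∈ S | τ i = σ i}) :=
        sum_le_sum fun i _ => card_mul_log_card_supportPerms_le A h01 i
      _ = P * ∑ i, log (∑ j, A i j : ℕ) + ∑ σ ∈ S, ∑ i, log #{τ ∈ S | τ i = σ i} := by
        rw [sum_add_distrib, mul_sum, sum_comm]
      _ ≤ P * ∑ i, log (∑ j, A i j : ℕ) + ∑ _σ ∈ S, ∑ j, (∑ k, logRootFactorial
            ((∑ l, A j l) - A j k) - logRootFactorial ((∑ l, A j l) - 1)) :=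
        add_le_add_right (sum_le_sum fun σ hσ => sum_log_card_fiber_supportPerms_le ih h01 hσ) _
      _ = P * ∑ j, (log (∑ l, A j l : ℕ) + (∑ k, logRootFactorial
            ((∑ l, A j l) - A j k) - logRootFactorial ((∑ l, A j l) - 1))) := by
        rw [sum_const, nsmul_eq_mul, sum_add_distrib, mul_add]
      _ = (m + 1) * P * ∑ j, logRootFactorial (∑ l, A j l) := by
        rw [sum_congr rfl fun j _ => log_add_sum_logRootFactorial_sub (A j) (h01 j) (hrow j),
          ← mul_sum, Fintype.card_fin, Nat.cast_add_one]
        ring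
  exact le_of_mul_le_mul_left key (by positivity)

theorem bregmanLogBound (n : ℕ) : BregmanLogBound n := by
  induction n with
  | zero => intro A _; simp [supportPerms]
  | succ m ih => exact ih.succ

/-- Brégman's theorem (Minc conjecture): for an `n × n` 0/1 matrix `A` with `r_i` ones in
row `i`, `Per(A) ≤ ∏_{i=1}^n (r_i!)^{1/r_i}`. -/
theorem bregman (n : ℕ) (A : Matrix (Fin n) (Fin n) ℕ)
    (h01 : ∀ i j, A i j = 0 ∨ A i j = 1) :
    (permanent A : ℝ) ≤
      ∏ i, ((Nat.factorial (∑ j, A i j) : ℝ)) ^ ((1 : ℝ) / ((∑ j, A i j : ℕ) : ℝ)) := by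
  simp only [factorial_rpow_one_div, ← exp_sum, permanent_eq_card_supportPerms A h01]
  exact (le_exp_log _).trans (exp_le_exp.mpr (bregmanLogBound n A h01))
end

section
/- Let L be a partition of the blocks of a Steiner system S(3, q+1, n) (n = q^4+1) into parts L_1,...,L_t each consisting of 1/p pairwise vertex-disjoint blocks, where 1/p is an integer. For a uniformly random permutation π of [n], the probability that there exist two disjoint edges e, f of the 3-set S(π) lying in two distinct blocks of the same part L_i is at most Θ(n^{-1/4}). Consequently, the number of 'bad' permutations is at most n!·Θ(n^{-1/4}). -/
/-!
A bad permutation maps two windows of positions `{i, i+1, i+2}` and `{j, j+1, j+2}` into two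
distinct, hence disjoint, blocks `b ≠ b'` of one part. For fixed `(b, b', i, j)` at most
`(q+1)⁶ (n-6)!` permutations do so, and there are at most `#P k² n²` such quadruples. As no
triple lies in two blocks, there are at most `C(n,3) / C(q+1,3) = O(n³/q³)` blocks, so
`#P k = O(n³/q³)` and the number of bad permutations is `O(k n⁵ q³ (n-6)!) = O(k q³ n!/n)`,
which is `O(k n^{-1/4} n!)` because `q⁴ < n`.
-/

open Finset
open scoped Classical

/-- The "3-set" of a permutation `π` of `ZMod n`: the `n` triples of cyclically
consecutive elements of `π`. -/
def rset (n : ℕ) [NeZero n] (π : Equiv.Perm (ZMod n)) : Finset (Finset (ZMod n)) :=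
  Finset.image (fun i : ZMod n => ({π i, π (i + 1), π (i + 2)} : Finset (ZMod n)))
    Finset.univ

open Equiv
open scoped Nat

section Perm

variable {α : Type*} [Fintype α] [DecidableEq α]

lemma card_filter_perm_forall_eq_self (s : Finset α) :
    #{σ : Perm α | ∀ x ∈ s, σ x = x} = (Fintype.card α - #s)! := by
  rw [← Fintype.card_subtype, ← card_compl, ← Fintype.card_coe, ← Fintype.card_perm]
  refine Fintype.card_congr ((Equiv.subtypeEquivRight ?_).trans
    (Perm.subtypeEquivSubtypePerm (· ∈ sᶜ)).symm)
  simp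

lemma card_filter_perm_forall_eq_le (s : Finset α) (g : α → α) :
    #{π : Perm α | ∀ x ∈ s, π x = g x} ≤ (Fintype.card α - #s)! := by
  rcases eq_empty_or_nonempty {π : Perm α | ∀ x ∈ s, π x = g x} with h | ⟨π₀, hπ₀⟩
  · simp [h]
  rw [← card_filter_perm_forall_eq_self]
  refine card_le_card_of_injOn (π₀⁻¹ * ·) (fun π hπ => ?_) (mul_right_injective _).injOn
  simp only [mem_coe, mem_filter, mem_univ, true_and] at hπ hπ₀ ⊢
  intro x hx
  rw [Perm.mul_apply, hπ x hx, ← hπ₀ x hx]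
  exact π₀.symm_apply_apply x

lemma card_filter_perm_forall_mem_le (s : Finset α) (F : α → Finset α) :
    #{π : Perm α | ∀ x ∈ s, π x ∈ F x} ≤ (∏ x ∈ s, #(F x)) * (Fintype.card α - #s)! := by
  let extend (g : ∀ x ∈ s, α) (y : α) : α := if h : y ∈ s then g y h else y
  calc #{π : Perm α | ∀ x ∈ s, π x ∈ F x}
      ≤ #((s.pi F).biUnion fun g => {π : Perm α | ∀ x ∈ s, π x = extend g x}) := by
        refine card_le_card fun π hπ => mem_biUnion.2 ⟨fun x _ => π x, ?_, ?_⟩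
        · simpa [mem_pi] using hπ
        · simp +contextual [extend]
    _ ≤ ∑ g ∈ s.pi F, #{π : Perm α | ∀ x ∈ s, π x = extend g x} := card_biUnion_le
    _ ≤ ∑ _g ∈ s.pi F, (Fintype.card α - #s)! :=
        sum_le_sum fun g _ => card_filter_perm_forall_eq_le s _
    _ = (∏ x ∈ s, #(F x)) * (Fintype.card α - #s)! := by
        rw [sum_const, Finset.card_pi, smul_eq_mul]

lemma card_filter_perm_image_subset_le {s t b b' : Finset α} (hbb' : Disjoint b b') :
    #{π : Perm α | s.image π ⊆ b ∧ t.image π ⊆ b'}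
      ≤ #b ^ #s * #b' ^ #t * (Fintype.card α - (#s + #t))! := by
  by_cases hst : Disjoint s t
  · let F (x : α) : Finset α := if x ∈ s then b else b'
    have hprod : ∏ x ∈ s ∪ t, #(F x) = #b ^ #s * #b' ^ #t := by
      rw [prod_union hst, prod_eq_pow_card (b := #b) fun x hx => by simp [F, hx],
        prod_eq_pow_card (b := #b') fun x hx => by simp [F, disjoint_right.1 hst hx]]
    calc #{π : Perm α | s.image π ⊆ b ∧ t.image π ⊆ b'}
        ≤ #{π : Perm α | ∀ x ∈ s ∪ t, π x ∈ F x} := by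
          refine card_le_card fun π hπ => ?_
          simp only [mem_filter, mem_univ, true_and] at hπ ⊢
          intro x hx
          rcases mem_union.1 hx with hx | hx
          · simpa [F, hx] using hπ.1 (mem_image_of_mem π hx)
          · simpa [F, disjoint_right.1 hst hx] using hπ.2 (mem_image_of_mem π hx)
      _ ≤ _ := card_filter_perm_forall_mem_le _ F
      _ = _ := by rw [hprod, card_union_of_disjoint hst]
  · obtain ⟨x, hxs, hxt⟩ := not_disjoint_iff.1 hst
    rw [filter_false_of_mem fun π _ hπ => disjoint_left.1 hbb'
      (hπ.1 (mem_image_of_mem π hxs)) (hπ.2 (mem_image_of_mem π hxt))]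
    simp

end Perm

def window (n : ℕ) (i : ZMod n) : Finset (ZMod n) := {i, i + 1, i + 2}

lemma card_window {n : ℕ} (hn : 3 ≤ n) (i : ZMod n) : #(window n i) = 3 := by
  have hcast : ∀ a b : ℕ, a < 3 → b < 3 → (a : ZMod n) = b → a = b := fun a b ha hb h => by
    rwa [ZMod.natCast_eq_natCast_iff', Nat.mod_eq_of_lt (by omega),
      Nat.mod_eq_of_lt (by omega)] at h
  refine card_eq_three.2 ⟨i, i + 1, i + 2, fun h => ?_, fun h => ?_, fun h => ?_, rfl⟩
  · exact absurd (hcast 1 0 (by norm_num) (by norm_num) (by simpa using h.symm)) (by norm_num)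
  · exact absurd (hcast 2 0 (by norm_num) (by norm_num) (by simpa using h.symm)) (by norm_num)
  · exact absurd (hcast 1 2 (by norm_num) (by norm_num) (by simpa using h)) (by norm_num)

lemma rset_eq_image_window (n : ℕ) [NeZero n] (π : Perm (ZMod n)) :
    rset n π = univ.image fun i => (window n i).image π := by
  simp [rset, window, image_insert]

lemma card_filter_exists_rset_subset_le {n : ℕ} [NeZero n] (hn : 3 ≤ n)
    {b b' : Finset (ZMod n)} (hbb' : Disjoint b b') :
    #{π : Perm (ZMod n) | ∃ e ∈ rset n π, ∃ f ∈ rset n π, e ⊆ b ∧ f ⊆ b'}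
      ≤ n ^ 2 * (#b ^ 3 * #b' ^ 3 * (n - 6)!) := by
  calc #{π : Perm (ZMod n) | ∃ e ∈ rset n π, ∃ f ∈ rset n π, e ⊆ b ∧ f ⊆ b'}
      ≤ #((univ : Finset (ZMod n × ZMod n)).biUnion fun ij =>
          {π : Perm (ZMod n) | (window n ij.1).image π ⊆ b ∧ (window n ij.2).image π ⊆ b'}) := by
        refine card_le_card fun π hπ => ?_
        simp only [mem_filter, mem_univ, true_and, rset_eq_image_window, exists_mem_image] at hπ
        obtain ⟨i, j, hi, hj⟩ := hπ
        exact mem_biUnion.2 ⟨(i, j), mem_univ _, by simp [hi, hj]⟩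
    _ ≤ ∑ ij : ZMod n × ZMod n,
          #{π : Perm (ZMod n) | (window n ij.1).image π ⊆ b ∧ (window n ij.2).image π ⊆ b'} :=
        card_biUnion_le
    _ ≤ ∑ _ij : ZMod n × ZMod n, #b ^ 3 * #b' ^ 3 * (n - 6)! := by
        gcongr with ij
        simpa [card_window hn, ZMod.card] using
          card_filter_perm_image_subset_le (s := window n ij.1) (t := window n ij.2) hbb'
    _ = n ^ 2 * (#b ^ 3 * #b' ^ 3 * (n - 6)!) := by simp [ZMod.card, sq]

lemma card_filter_exists_two_blocks_le {n m k : ℕ} [NeZero n] (hn : 3 ≤ n)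
    (P : Finset (Finset (Finset (ZMod n)))) (hm : ∀ p ∈ P, ∀ b ∈ p, #b = m)
    (hk : ∀ p ∈ P, #p = k) (hdisj : ∀ p ∈ P, ∀ b ∈ p, ∀ b' ∈ p, b ≠ b' → Disjoint b b') :
    #{π : Perm (ZMod n) | ∃ p ∈ P, ∃ e ∈ rset n π, ∃ f ∈ rset n π, ∃ b ∈ p, ∃ b' ∈ p,
        b ≠ b' ∧ e ⊆ b ∧ f ⊆ b'}
      ≤ #P * k ^ 2 * (n ^ 2 * (m ^ 6 * (n - 6)!)) := by
  calc _ ≤ #(P.biUnion fun p => p.offDiag.biUnion fun bb =>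
          {π : Perm (ZMod n) | ∃ e ∈ rset n π, ∃ f ∈ rset n π, e ⊆ bb.1 ∧ f ⊆ bb.2}) := by
        refine card_le_card fun π hπ => ?_
        simp only [mem_filter, mem_univ, true_and] at hπ
        obtain ⟨p, hp, e, he, f, hf, b, hb, b', hb', hne, heb, hfb'⟩ := hπ
        simp only [mem_biUnion, mem_offDiag, mem_filter, mem_univ, true_and]
        exact ⟨p, hp, (b, b'), ⟨hb, hb', hne⟩, e, he, f, hf, heb, hfb'⟩
    _ ≤ ∑ p ∈ P, ∑ bb ∈ p.offDiag,
          #{π : Perm (ZMod n) | ∃ e ∈ rset n π, ∃ f ∈ rset n π, e ⊆ bb.1 ∧ f ⊆ bb.2} :=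
        card_biUnion_le.trans (sum_le_sum fun p _ => card_biUnion_le)
    _ ≤ ∑ p ∈ P, ∑ _bb ∈ p.offDiag, n ^ 2 * (m ^ 6 * (n - 6)!) := by
        gcongr with p hp bb hbb
        obtain ⟨hb, hb', hne⟩ := mem_offDiag.1 hbb
        simpa [hm p hp _ hb, hm p hp _ hb', ← pow_add] using
          card_filter_exists_rset_subset_le hn (hdisj p hp _ hb _ hb' hne)
    _ ≤ ∑ _p ∈ P, k ^ 2 * (n ^ 2 * (m ^ 6 * (n - 6)!)) := by
        gcongr with p hp
        rw [sum_const, smul_eq_mul, offDiag_card, hk p hp, ← sq]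
        exact Nat.mul_le_mul_right _ (Nat.sub_le _ _)
    _ = #P * k ^ 2 * (n ^ 2 * (m ^ 6 * (n - 6)!)) := by
        rw [sum_const, smul_eq_mul, mul_assoc]

lemma card_mul_choose_le_choose {α : Type*} [Fintype α] [DecidableEq α]
    {Bl : Finset (Finset α)} {m t : ℕ} (hm : ∀ b ∈ Bl, #b = m)
    (huniq : ∀ T : Finset α, #T = t → ∀ b ∈ Bl, ∀ b' ∈ Bl, T ⊆ b → T ⊆ b' → b = b') :
    #Bl * m.choose t ≤ (Fintype.card α).choose t := by
  have hdisj : (Bl : Set (Finset α)).PairwiseDisjoint (powersetCard t) :=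
    fun b hb b' hb' hne => disjoint_left.2 fun T hT hT' =>
      hne (huniq T (mem_powersetCard.1 hT).2 b hb b' hb' (mem_powersetCard.1 hT).1
        (mem_powersetCard.1 hT').1)
  calc #Bl * m.choose t = #(Bl.biUnion (powersetCard t)) := by
        rw [card_biUnion hdisj, sum_congr rfl fun b hb => by rw [card_powersetCard, hm b hb],
          sum_const, smul_eq_mul]
    _ ≤ #((univ : Finset α).powersetCard t) :=
        card_le_card <| biUnion_subset.2 fun _ _ => powersetCard_mono (subset_univ _)
    _ = (Fintype.card α).choose t := by rw [card_powersetCard, card_univ]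

lemma card_mul_le_card_of_pairwiseDisjoint {β : Type*} [DecidableEq β]
    {P : Finset (Finset β)} {B : Finset β} {k : ℕ} (hsub : ∀ p ∈ P, p ⊆ B)
    (hk : ∀ p ∈ P, #p = k) (hdisj : (P : Set (Finset β)).PairwiseDisjoint id) :
    #P * k ≤ #B :=
  calc #P * k = #(P.biUnion id) := ((card_biUnion hdisj).trans (sum_const_nat hk)).symm
    _ ≤ #B := card_le_card (biUnion_subset.2 hsub)

lemma pow_le_two_pow_mul_descFactorial {m n k : ℕ} (h : m ≤ 2 * (n + 1 - k)) :
    m ^ k ≤ 2 ^ k * n.descFactorial k :=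
  calc m ^ k ≤ (2 * (n + 1 - k)) ^ k := Nat.pow_le_pow_left h k
    _ = 2 ^ k * (n + 1 - k) ^ k := mul_pow _ _ _
    _ ≤ 2 ^ k * n.descFactorial k := Nat.mul_le_mul_left _ (Nat.pow_sub_le_descFactorial n k)

lemma pow_three_le_choose_three {q : ℕ} (hq : 2 ≤ q) : q ^ 3 ≤ 48 * (q + 1).choose 3 := by
  have := pow_le_two_pow_mul_descFactorial (m := q) (n := q + 1) (k := 3) (by omega)
  rwa [Nat.descFactorial_eq_factorial_mul_choose, ← mul_assoc] at this

lemma pow_mul_factorial_sub_le {n k : ℕ} (h : 2 * k ≤ n) : n ^ k * (n - k)! ≤ 2 ^ k * n ! := by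
  calc n ^ k * (n - k)! ≤ 2 ^ k * n.descFactorial k * (n - k)! :=
        Nat.mul_le_mul_right _ (pow_le_two_pow_mul_descFactorial (by omega))
    _ = 2 ^ k * n ! := by
        rw [mul_assoc, mul_comm _ (n - k)!, Nat.factorial_mul_descFactorial (by omega)]

lemma pow_three_le_mul_rpow {x y : ℝ} (hx : 0 ≤ x) (h : x ^ 4 ≤ y) :
    x ^ 3 ≤ y * y ^ (-(1 / 4 : ℝ)) := by
  have hy : 0 ≤ y := (by positivity : 0 ≤ x ^ 4).trans h
  calc x ^ 3 = (x ^ 4) ^ (3 / 4 : ℝ) := by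
        rw [← Real.rpow_natCast, ← Real.rpow_natCast, ← Real.rpow_mul hx]; norm_num
    _ ≤ y ^ (3 / 4 : ℝ) := by gcongr
    _ = y * y ^ (-(1 / 4 : ℝ)) := by
        rw [show (3 / 4 : ℝ) = 1 + -(1 / 4) by norm_num, Real.rpow_add' hy (by norm_num),
          Real.rpow_one]

/-- Let `L` be a partition of the blocks of a Steiner system `S(3, q+1, n)` (`n = q⁴+1`)
into parts each consisting of `k = 1/p` pairwise vertex-disjoint blocks.  The number of
"bad" permutations `π` of `[n]` — those for which some part contains two edges of the
3-set of `π` lying in two distinct blocks of that part — is at most `n!·Θ(n^{-1/4})`;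
equivalently, the probability that a uniformly random permutation is bad is at most
`Θ(n^{-1/4})`. -/
theorem bad_permutations_bound (k : ℕ) (hk : 2 ≤ k) :
    ∃ C : ℝ, 0 < C ∧
      ∀ (q n : ℕ) [NeZero n], n = q ^ 4 + 1 → 2 ≤ q →
      ∀ Bl : Finset (Finset (ZMod n)),
        (∀ b ∈ Bl, b.card = q + 1) →
        (∀ T : Finset (ZMod n), T.card = 3 → ∃! b, b ∈ Bl ∧ T ⊆ b) →
      ∀ P : Finset (Finset (Finset (ZMod n))),
        (∀ p ∈ P, ∀ b ∈ p, b ∈ Bl) →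
        (∀ b ∈ Bl, ∃! p, p ∈ P ∧ b ∈ p) →
        (∀ p ∈ P, p.card = k) →
        (∀ p ∈ P, ∀ b ∈ p, ∀ b' ∈ p, b ≠ b' → Disjoint b b') →
        (((Finset.univ : Finset (Equiv.Perm (ZMod n))).filter (fun π =>
            ∃ p ∈ P, ∃ e ∈ rset n π, ∃ f ∈ rset n π, ∃ b ∈ p, ∃ b' ∈ p,
              b ≠ b' ∧ e ⊆ b ∧ f ⊆ b')).card : ℝ) ≤
          C * (n : ℝ) ^ (-(1 / 4 : ℝ)) * (Nat.factorial n : ℝ) := by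
  refine ⟨196608 * k, by positivity, ?_⟩
  intro q n _ hn hq Bl hBl hSteiner P hPBl hPart hPcard hPdisj
  have hn17 : 17 ≤ n := by have : 2 ^ 4 ≤ q ^ 4 := Nat.pow_le_pow_left hq 4; omega
  have hbad := card_filter_exists_two_blocks_le (by omega) P
    (fun p hp b hb => hBl b (hPBl p hp b hb)) hPcard hPdisj
  have hparts : #P * k ≤ #Bl := card_mul_le_card_of_pairwiseDisjoint hPBl hPcard
    fun p hp p' hp' hne => disjoint_left.2 fun b hbp hbp' =>
      hne ((hPart b (hPBl p hp b hbp)).unique ⟨hp, hbp⟩ ⟨hp', hbp'⟩)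
  have hblocks : #Bl * (q + 1).choose 3 ≤ n.choose 3 := by
    simpa using card_mul_choose_le_choose hBl
      fun T hT b hb b' hb' hTb hTb' => (hSteiner T hT).unique ⟨hb, hTb⟩ ⟨hb', hTb'⟩
  have hpk : #P * k * q ^ 3 ≤ 48 * n ^ 3 :=
    calc #P * k * q ^ 3 ≤ #Bl * (48 * (q + 1).choose 3) :=
          Nat.mul_le_mul hparts (pow_three_le_choose_three hq)
      _ ≤ 48 * n ^ 3 := by linarith [Nat.choose_le_pow n 3]
  have hq6 : (q + 1) ^ 6 ≤ 2 ^ 6 * q ^ 6 := by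
    rw [← mul_pow]; exact Nat.pow_le_pow_left (by omega) 6
  have hfact : n ^ 6 * (n - 6)! ≤ 2 ^ 6 * n ! := pow_mul_factorial_sub_le (by omega)
  have hq3 : (q : ℝ) ^ 3 ≤ n * (n : ℝ) ^ (-(1 / 4 : ℝ)) :=
    pow_three_le_mul_rpow (by positivity) (by rw [hn]; push_cast; linarith)
  calc _ ≤ (#P : ℝ) * k ^ 2 * (n ^ 2 * ((q + 1 : ℕ) ^ 6 * ((n - 6)! : ℝ))) := by
        exact_mod_cast hbad
    _ = k * n ^ 2 * ((q + 1 : ℕ) ^ 6 : ℕ) * (#P * k) * ((n - 6)! : ℝ) := by push_cast; ring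
    _ ≤ k * n ^ 2 * (2 ^ 6 * q ^ 6 : ℕ) * (#P * k) * ((n - 6)! : ℝ) := by gcongr
    _ = 2 ^ 6 * k * n ^ 2 * ((#P * k * q ^ 3 : ℕ) : ℝ) * q ^ 3 * ((n - 6)! : ℝ) := by
        push_cast; ring
    _ ≤ 2 ^ 6 * k * n ^ 2 * ((48 * n ^ 3 : ℕ) : ℝ) * (n * n ^ (-(1 / 4 : ℝ))) * ((n - 6)! : ℝ) := by
        gcongr
    _ = 3072 * k * n ^ (-(1 / 4 : ℝ)) * ((n ^ 6 * (n - 6)! : ℕ) : ℝ) := by push_cast; ring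
    _ ≤ 3072 * k * n ^ (-(1 / 4 : ℝ)) * ((2 ^ 6 * n ! : ℕ) : ℝ) := by gcongr
    _ = 196608 * k * n ^ (-(1 / 4 : ℝ)) * n ! := by push_cast; ring
end
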